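/- arXiv:1811.11578 — 3 statements merged into one kernel-verified Lean document; each statement's English description precedes it below -/
import Mathlib

section
/- Under the GOSPAL pricing rule, the price charged to any user is at most its bid: for any bid vector q with q_i > 0 for all i, 0 ≤ p_i(q) ≤ q_i for every user i. -/
open Finset

/-- Perceived social utility of the (bid-independent) allocation `A ω` under bids `q`. -/
def Ut {V Ω : Type*} (A : Ω → Finset V) (q : V → ℝ) (ω : Ω) : ℝ := ∑ j ∈ A ω, q j

/-- Maximum perceived social utility over all group orderings. -/
noncomputable def Ustar {V Ω : Type*} [Fintype Ω] [Nonempty Ω]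
    (A : Ω → Finset V) (q : V → ℝ) : ℝ :=
  Finset.univ.sup' Finset.univ_nonempty (fun ω => Ut A q ω)

/-- GOSPAL price for user `i` under bids `q`, when the ordering `ω` is selected:
`p_i(q) = (lim_{ε→0⁺} Ũ*(q_{-i}(ε)) − (Ũ*(q) − q_i)) · x_i(ω)`; the limit term equals
`Ũ*` evaluated with user `i`'s bid set to `0` (by continuity of `Ũ*`). -/
noncomputable def price {V Ω : Type*} [Fintype Ω] [Nonempty Ω] [DecidableEq V]
    (A : Ω → Finset V) (q : V → ℝ) (i : V) (ω : Ω) : ℝ :=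
  (Ustar A (Function.update q i 0) - (Ustar A q - q i)) * (if i ∈ A ω then 1 else 0)

/-!
Setting user `i`'s bid to `0` lowers every `Ut A q ω` by `q i` or by `0`, according to whether
`i ∈ A ω`. Hence the maximum `Ustar` drops by an amount in `[0, q i]`, and the price of an
allocated user is `q i` minus that drop.
-/

section Utility

variable {V Ω : Type*} [DecidableEq V] (A : Ω → Finset V) (q : V → ℝ) (i : V)

theorem Ut_eq_Ut_update_zero_add (ω : Ω) :
    Ut A q ω = Ut A (Function.update q i 0) ω + if i ∈ A ω then q i else 0 := by
  unfold Ut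
  by_cases hi : i ∈ A ω
  · rw [sum_update_of_mem hi, if_pos hi, sum_eq_add_sum_sdiff_singleton_of_mem hi]
    ring
  · rw [sum_update_of_notMem hi, if_neg hi, add_zero]

variable {q i}

theorem Ut_update_zero_le (hqi : 0 ≤ q i) (ω : Ω) :
    Ut A (Function.update q i 0) ω ≤ Ut A q ω := by
  rw [Ut_eq_Ut_update_zero_add A q i ω]
  split_ifs <;> linarith

theorem Ut_le_Ut_update_zero_add (hqi : 0 ≤ q i) (ω : Ω) :
    Ut A q ω ≤ Ut A (Function.update q i 0) ω + q i := by
  rw [Ut_eq_Ut_update_zero_add A q i ω]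
  split_ifs <;> linarith

end Utility

section MaxUtility

variable {V Ω : Type*} [Fintype Ω] [Nonempty Ω] (A : Ω → Finset V)

theorem Ustar_le_Ustar_add {q q' : V → ℝ} {c : ℝ} (h : ∀ ω, Ut A q ω ≤ Ut A q' ω + c) :
    Ustar A q ≤ Ustar A q' + c :=
  (sup'_le_iff _ _).2 fun ω _ =>
    (h ω).trans (add_le_add_left (le_sup' (fun ω => Ut A q' ω) (mem_univ ω)) c)

variable [DecidableEq V] {q : V → ℝ} {i : V}

theorem Ustar_update_zero_le (hqi : 0 ≤ q i) : Ustar A (Function.update q i 0) ≤ Ustar A q := by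
  simpa using Ustar_le_Ustar_add (c := 0) A fun ω => by simpa using Ut_update_zero_le A hqi ω

theorem Ustar_le_Ustar_update_zero_add (hqi : 0 ≤ q i) :
    Ustar A q ≤ Ustar A (Function.update q i 0) + q i :=
  Ustar_le_Ustar_add A (Ut_le_Ut_update_zero_add A hqi)

end MaxUtility

theorem gospal_price_bounds_general {V Ω : Type*} [Fintype Ω] [Nonempty Ω]
    [DecidableEq V]
    (A : Ω → Finset V) (q : V → ℝ) (hq : ∀ j, 0 < q j)
    (ω : Ω) (i : V) :
    0 ≤ price A q i ω ∧ price A q i ω ≤ q i := by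
  have hdrop_le := Ustar_le_Ustar_update_zero_add A (hq i).le
  have hdrop_nonneg := Ustar_update_zero_le A (hq i).le
  unfold price
  split_ifs <;> constructor <;> linarith [hq i]

/-- Under the GOSPAL pricing rule, for any bid vector `q` with `q i > 0`
for all users, the price charged to any user is nonnegative and at most its bid. -/
theorem gospal_price_bounds {V Ω : Type*} [Fintype V] [Fintype Ω] [Nonempty Ω]
    [DecidableEq V]
    (A : Ω → Finset V) (q : V → ℝ) (hq : ∀ j, 0 < q j)
    (ω : Ω) (hmax : ∀ ω' : Ω, Ut A q ω' ≤ Ut A q ω) (i : V) :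
    0 ≤ price A q i ω ∧ price A q i ω ≤ q i :=
  gospal_price_bounds_general A q hq ω i
end

section
/- Under the GOSPAL mechanism, if user i is allocated both when bidding its true value r_i and when bidding q_i = r_i + Δ (Δ > 0, other bids fixed), then the price charged to i is the same in both cases, hence its utility is unchanged. -/
/-! The term `Ustar A (update q i 0)` of the price does not see `i`'s bid, so it suffices that
`Ustar - q i` is the same at both bids. If `i` is allocated by an optimal ordering at bid `a`,
that ordering shows `Ustar` at bid `b` is at least `Ustar` at bid `a` plus `b - a`; as `i` is
allocated optimally at both bids, the two inequalities give equality. -/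

open Finset

section

variable {V Ω : Type*} (A : Ω → Finset V)

theorem Ut_update_of_mem [DecidableEq V] {q : V → ℝ} {i : V} {ω : Ω} (hi : i ∈ A ω) (a : ℝ) :
    Ut A (Function.update q i a) ω = Ut A q ω + (a - q i) := by
  have hrest : ∑ j ∈ (A ω).erase i, Function.update q i a j = ∑ j ∈ (A ω).erase i, q j :=
    sum_congr rfl fun j hj => Function.update_of_ne (ne_of_mem_erase hj) _ _
  simp only [Ut, ← add_sum_erase _ _ hi, Function.update_self, hrest]
  ring

variable [Fintype Ω] [Nonempty Ω]

theorem Ustar_eq_of_forall_le {q : V → ℝ} {ω₀ : Ω} (hmax : ∀ ω, Ut A q ω ≤ Ut A q ω₀) :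
    Ustar A q = Ut A q ω₀ :=
  le_antisymm (sup'_le _ _ fun ω _ => hmax ω) (le_sup' _ (mem_univ ω₀))

variable [DecidableEq V]

/-- The optimal ordering `ω₀` alone already gains the full raise `b - a`. -/
theorem Ustar_update_add_sub_le {q : V → ℝ} {i : V} {a : ℝ} {ω₀ : Ω}
    (hmax : ∀ ω, Ut A (Function.update q i a) ω ≤ Ut A (Function.update q i a) ω₀)
    (hi : i ∈ A ω₀) (b : ℝ) :
    Ustar A (Function.update q i a) + (b - a) ≤ Ustar A (Function.update q i b) := by
  have hgain : Ut A (Function.update q i b) ω₀ = Ut A (Function.update q i a) ω₀ + (b - a) := by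
    rw [← Function.update_idem a b q, Ut_update_of_mem A hi, Function.update_self]
  calc Ustar A (Function.update q i a) + (b - a)
      = Ut A (Function.update q i b) ω₀ := by rw [Ustar_eq_of_forall_le A hmax, hgain]
    _ ≤ Ustar A (Function.update q i b) := le_sup' _ (mem_univ ω₀)

theorem Ustar_update_sub_eq {q : V → ℝ} {i : V} {a b : ℝ} {ωa ωb : Ω}
    (hmaxa : ∀ ω, Ut A (Function.update q i a) ω ≤ Ut A (Function.update q i a) ωa)
    (hmaxb : ∀ ω, Ut A (Function.update q i b) ω ≤ Ut A (Function.update q i b) ωb)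
    (hia : i ∈ A ωa) (hib : i ∈ A ωb) :
    Ustar A (Function.update q i a) - a = Ustar A (Function.update q i b) - b := by
  have hab := Ustar_update_add_sub_le A hmaxa hia b
  have hba := Ustar_update_add_sub_le A hmaxb hib a
  linarith

theorem price_of_mem {q : V → ℝ} {i : V} {ω : Ω} (hi : i ∈ A ω) :
    price A q i ω = Ustar A (Function.update q i 0) - (Ustar A q - q i) := by
  simp only [price, hi, if_true, mul_one]

theorem price_update_of_mem {q : V → ℝ} {i : V} {ω : Ω} (hi : i ∈ A ω) (a : ℝ) :
    price A (Function.update q i a) i ω =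
      Ustar A (Function.update q i 0) - (Ustar A (Function.update q i a) - a) := by
  rw [price_of_mem A hi, Function.update_idem, Function.update_self]

end

theorem gospal_overbid_allocated_same_price_general {V Ω : Type*} [Fintype Ω]
    [Nonempty Ω] [DecidableEq V]
    (A : Ω → Finset V) (q : V → ℝ) (i : V) (r Δ : ℝ)
    (ω₁ ω₂ : Ω)
    (hmax₁ : ∀ ω : Ω, Ut A (Function.update q i r) ω ≤ Ut A (Function.update q i r) ω₁)
    (hmax₂ : ∀ ω : Ω, Ut A (Function.update q i (r + Δ)) ω ≤
        Ut A (Function.update q i (r + Δ)) ω₂)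
    (halloc₁ : i ∈ A ω₁) (halloc₂ : i ∈ A ω₂) :
    price A (Function.update q i (r + Δ)) i ω₂ = price A (Function.update q i r) i ω₁ ∧
    r - price A (Function.update q i (r + Δ)) i ω₂ =
      r - price A (Function.update q i r) i ω₁ := by
  have hprice : price A (Function.update q i (r + Δ)) i ω₂ =
      price A (Function.update q i r) i ω₁ := by
    rw [price_update_of_mem A halloc₂, price_update_of_mem A halloc₁,
      Ustar_update_sub_eq A hmax₂ hmax₁ halloc₂ halloc₁]
  exact ⟨hprice, by rw [hprice]⟩

/-- If user `i` is allocated both when bidding its true value `r` and when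
overbidding `r + Δ` (`Δ > 0`, other bids fixed), via utility-maximizing orderings in each
case, then the price charged to `i` is the same in both cases; hence its utility
`(r − p_i)` is unchanged. -/
theorem gospal_overbid_allocated_same_price {V Ω : Type*} [Fintype V] [Fintype Ω]
    [Nonempty Ω] [DecidableEq V]
    (A : Ω → Finset V) (q : V → ℝ) (i : V) (r Δ : ℝ) (hr : 0 < r) (hΔ : 0 < Δ)
    (ω₁ ω₂ : Ω)
    (hmax₁ : ∀ ω : Ω, Ut A (Function.update q i r) ω ≤ Ut A (Function.update q i r) ω₁)
    (hmax₂ : ∀ ω : Ω, Ut A (Function.update q i (r + Δ)) ω ≤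
        Ut A (Function.update q i (r + Δ)) ω₂)
    (halloc₁ : i ∈ A ω₁) (halloc₂ : i ∈ A ω₂) :
    price A (Function.update q i (r + Δ)) i ω₂ = price A (Function.update q i r) i ω₁ ∧
    r - price A (Function.update q i (r + Δ)) i ω₂ =
      r - price A (Function.update q i r) i ω₁ :=
  gospal_overbid_allocated_same_price_general A q i r Δ ω₁ ω₂ hmax₁ hmax₂ halloc₁ halloc₂
end

section
/- Under GOSPAL, truthful bidding yields nonnegative utility: for any user i with true valuation r_i and any bids of the other users, U_i(r_i, q_{-i}) ≥ 0 (individual rationality). -/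
open Finset

/-! Since `Ũ*` is monotone in the bids, lowering user `i`'s bid to `0` can only lower it;
hence the price never exceeds a nonnegative bid, and a truthful bid `r ≥ 0` leaves `r - pᵢ ≥ 0`. -/

section Monotonicity

variable {V Ω : Type*} (A : Ω → Finset V)

theorem Ut_mono (ω : Ω) : Monotone fun q : V → ℝ => Ut A q ω :=
  fun _ _ hqq' => Finset.sum_le_sum fun j _ => hqq' j

theorem Ustar_mono [Fintype Ω] [Nonempty Ω] : Monotone (Ustar A) :=
  fun _ _ hqq' => Finset.sup'_mono_fun fun ω _ => Ut_mono A ω hqq'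

end Monotonicity

theorem price_le_bid {V Ω : Type*} [Fintype Ω] [Nonempty Ω] [DecidableEq V]
    (A : Ω → Finset V) (q : V → ℝ) (i : V) (ω : Ω) (hqi : 0 ≤ q i) :
    price A q i ω ≤ q i := by
  have hdrop : Ustar A (Function.update q i 0) ≤ Ustar A q :=
    Ustar_mono A (update_le_self_iff.mpr hqi)
  unfold price
  split_ifs <;> linarith

theorem gospal_individual_rationality_general {V Ω : Type*} [Fintype Ω] [Nonempty Ω]
    [DecidableEq V]
    (A : Ω → Finset V) (q : V → ℝ) (i : V) (r : ℝ) (hr : 0 < r)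
    (ω : Ω) :
    0 ≤ (r - price A (Function.update q i r) i ω) * (if i ∈ A ω then 1 else 0) := by
  have hprice : price A (Function.update q i r) i ω ≤ r := by
    simpa using price_le_bid A (Function.update q i r) i ω (by simpa using hr.le)
  exact mul_nonneg (sub_nonneg.mpr hprice) (by split_ifs <;> norm_num)

/-- Individual rationality: under GOSPAL, truthful bidding yields
nonnegative utility: for any user `i` with true valuation `r > 0`, positive bids of the
other users, and any utility-maximizing ordering selected at the truthful bid vector,
`(r − p_i) · x_i ≥ 0`. -/
theorem gospal_individual_rationality {V Ω : Type*} [Fintype V] [Fintype Ω] [Nonempty Ω]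
    [DecidableEq V]
    (A : Ω → Finset V) (q : V → ℝ) (i : V) (r : ℝ) (hr : 0 < r)
    (hq : ∀ j, j ≠ i → 0 < q j)
    (ω : Ω)
    (hmax : ∀ ω' : Ω, Ut A (Function.update q i r) ω' ≤ Ut A (Function.update q i r) ω) :
    0 ≤ (r - price A (Function.update q i r) i ω) * (if i ∈ A ω then 1 else 0) :=
  gospal_individual_rationality_general A q i r hr ω
end
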